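/- Let a, b, c, d, e, f be integers such that the four triples (a,b,c), (c,d,e), (a,e,f), (b,d,f) are admissible, set b̄ := n−1−b, s := max(0, n−1−2e, (d+f−b)−(d+e−c), (b+f−d)+(c+d−e)−(n−1)) and S := min(c+d−e, a+f−e, n−1−(a+e−f), n−1−(d+e−c)), and let z be an integer with s ≤ z ≤ S. Then [2f; b+d+f+1−n] · [(b+f−d)+(c+d−e)−z; b+f−d] · [(d+e−c)+z; d+f−b] = [2f; b̄+d+f+1−n] · [(b̄+f−d)+(c+d−e)−z; b̄+f−d] · [(d+e−c)+z; d+f−b̄]. -/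

import Mathlib

/-!
Put `x = b+f-d`, `y = d+f-b`, `u = b+d+f+1-n`, `v = n-1-(b+d-f)`, `p = c+d-e-z`,
`w = b+e-c-f+z` and `r = n-1-x-p`; under the hypotheses these are natural numbers, the
product of the three binomials is `[x+y; u] [x+p; x] [y+w; y]`, and `b ↦ n-1-b` swaps
`x ↔ v`, `y ↔ u`, `w ↔ r` while fixing `p`.

If `x + y = 2f ≥ n`, the first binomial on each side contains the factor `{n} = 0`.
Otherwise every binomial is a quotient of quantum factorials, and `{n-a} = {a}` gives
`{m}! {n-1-m}! = {n-1}!`, so the product equals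
`{x+y}! {y+w}! {n-1}! / ({x}! {y}! {u}! {v}! {p}! {w}! {r}!)`, which is symmetric under the swap.
-/

/-- The quantum number `{a} = ξ^a - ξ^{-a}` where `ξ = exp(πi/n)`. -/
noncomputable def qnum (n : ℕ) (a : ℂ) : ℂ :=
  Complex.exp (Real.pi * Complex.I * a / n) - Complex.exp (-(Real.pi * Complex.I * a) / n)

/-- The quantum factorial `{k}! = ∏_{j=1}^k {j}`. -/
noncomputable def qfact (n k : ℕ) : ℂ :=
  ∏ j ∈ Finset.range k, qnum n (j + 1)

/-- The quantum binomial `[a; a-k] = ∏_{j=0}^{k-1} {a-j}/{a-k-j}` (top entry `a`,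
difference of the two entries the natural number `k`), an empty product being `1`. -/
noncomputable def qbinom (n : ℕ) (a : ℂ) (k : ℕ) : ℂ :=
  ∏ j ∈ Finset.range k, qnum n (a - j) / qnum n ((k : ℂ) - j)

/-- The quantum binomial `[a; b]` for integer entries. -/
noncomputable def qbinomZ (n : ℕ) (a b : ℤ) : ℂ :=
  qbinom n (a : ℂ) (a - b).toNat

/-- A triple of integers `(i,j,k)` is admissible. -/
def Admissible (n : ℕ) (i j k : ℤ) : Prop :=
  0 < i ∧ i < (n : ℤ) - 1 ∧ 0 < j ∧ j < (n : ℤ) - 1 ∧ 0 < k ∧ k < (n : ℤ) - 1 ∧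
  (n : ℤ) - 1 < i + j + k ∧ i + j + k < 2 * ((n : ℤ) - 1) ∧
  0 < i + j - k ∧ i + j - k < (n : ℤ) - 1 ∧
  0 < j + k - i ∧ j + k - i < (n : ℤ) - 1 ∧
  0 < k + i - j ∧ k + i - j < (n : ℤ) - 1

open Finset

theorem qnum_eq_two_mul_I_mul_sin (n : ℕ) (a : ℂ) :
    qnum n a = 2 * Complex.I * Complex.sin (Real.pi * a / n) := by
  rw [qnum, Complex.sin]
  ring_nf
  rw [Complex.I_sq]
  ring_nf

theorem qnum_zero (n : ℕ) : qnum n 0 = 0 := by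
  simp [qnum]

theorem qnum_natCast_sub (n : ℕ) (a : ℂ) : qnum n (n - a) = qnum n a := by
  rcases eq_or_ne n 0 with rfl | hn
  · simp [qnum]
  have harg : (Real.pi : ℂ) * (n - a) / n = Real.pi - Real.pi * a / n := by
    field_simp
  rw [qnum_eq_two_mul_I_mul_sin, qnum_eq_two_mul_I_mul_sin, harg, Complex.sin_pi_sub]

theorem qnum_natCast_self (n : ℕ) : qnum n n = 0 := by
  simpa [qnum_zero] using qnum_natCast_sub n 0

theorem qnum_natCast_ne_zero {n j : ℕ} (hj0 : 0 < j) (hjn : j < n) : qnum n j ≠ 0 := by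
  have hj : (0 : ℝ) < j := by exact_mod_cast hj0
  have hn : (0 : ℝ) < n := by exact_mod_cast hj0.trans hjn
  have hsin : 0 < Real.sin (Real.pi * j / n) := by
    apply Real.sin_pos_of_pos_of_lt_pi (by positivity)
    rw [div_lt_iff₀ hn]
    gcongr
  rw [qnum_eq_two_mul_I_mul_sin]
  have hcast : Complex.sin (Real.pi * j / n) = (Real.sin (Real.pi * j / n) : ℂ) := by
    push_cast; rfl
  rw [hcast]
  exact mul_ne_zero (by simp) (by exact_mod_cast hsin.ne')

theorem qfact_succ (n k : ℕ) : qfact n (k + 1) = qfact n k * qnum n (k + 1) :=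
  prod_range_succ _ _

theorem qfact_ne_zero {n k : ℕ} (hk : k < n) : qfact n k ≠ 0 :=
  prod_ne_zero_iff.2 fun j hj ↦ by
    exact_mod_cast qnum_natCast_ne_zero j.succ_pos (by rw [mem_range] at hj; omega)

theorem qfact_mul_qfact {n k m : ℕ} (h : k + m + 1 = n) :
    qfact n k * qfact n m = qfact n (n - 1) := by
  induction k generalizing m with
  | zero => simp [qfact, show m = n - 1 by omega]
  | succ k ih =>
    have hsymm : qnum n (k + 1) = qnum n (m + 1) := by
      rw [← qnum_natCast_sub n (m + 1)]
      congr 1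
      rw [← h]
      push_cast
      ring
    rw [← ih (m := m + 1) (by omega), qfact_succ, qfact_succ, hsymm]
    ring

theorem prod_range_qnum_mul_qfact (n k m : ℕ) :
    (∏ j ∈ range k, qnum n (↑(k + m) - j)) * qfact n m = qfact n (k + m) := by
  induction k with
  | zero => simp [qfact]
  | succ k ih =>
    rw [prod_range_succ', show k + 1 + m = k + m + 1 by ring, qfact_succ, ← ih]
    push_cast
    simp only [sub_zero, add_sub_add_right_eq_sub]
    ring

theorem qbinom_natCast_add {n k m : ℕ} (h : k + m < n) :
    qbinom n ↑(k + m) k = qfact n (k + m) / (qfact n k * qfact n m) := by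
  have hk := prod_range_qnum_mul_qfact n k 0
  rw [add_zero, qfact, prod_range_zero, mul_one] at hk
  rw [qbinom, prod_div_distrib, hk, ← prod_range_qnum_mul_qfact n k m,
    mul_div_mul_right _ _ (qfact_ne_zero (by omega))]

theorem qbinom_natCast_eq_zero {n a k : ℕ} (hna : n ≤ a) (hak : a < n + k) :
    qbinom n a k = 0 := by
  refine prod_eq_zero (mem_range.2 (show a - n < k by omega)) ?_
  rw [Nat.cast_sub hna, sub_sub_cancel, qnum_natCast_self, zero_div]

theorem qbinomZ_natCast (n a b : ℕ) : qbinomZ n a b = qbinom n a (a - b) := by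
  rw [qbinomZ, Int.toNat_sub, Int.cast_natCast]

theorem qbinomZ_natCast_eq_div {n a b : ℕ} (hba : b ≤ a) (han : a < n) :
    qbinomZ n a b = qfact n a / (qfact n (a - b) * qfact n b) := by
  obtain ⟨k, rfl⟩ := Nat.exists_eq_add_of_le' hba
  rw [qbinomZ_natCast, Nat.add_sub_cancel, qbinom_natCast_add han]

theorem qbinomZ_natCast_eq_zero {n a b : ℕ} (hna : n ≤ a) (hbn : b < n) :
    qbinomZ n a b = 0 := by
  rw [qbinomZ_natCast, qbinom_natCast_eq_zero hna (by omega)]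

theorem qbinomZ_triple_symm {n x y u v p w r : ℕ} (hxy : x + y = u + v) (hv : p + w + v + 1 = n)
    (hr : p + x + r + 1 = n) (hyw : y + w < n) (hu : u < n) :
    qbinomZ n ↑(x + y) u * qbinomZ n ↑(x + p) x * qbinomZ n ↑(y + w) y =
      qbinomZ n ↑(x + y) y * qbinomZ n ↑(v + p) v * qbinomZ n ↑(y + w) u := by
  rcases le_or_gt n (x + y) with hxyn | hxyn
  · rw [qbinomZ_natCast_eq_zero hxyn hu, qbinomZ_natCast_eq_zero hxyn (by omega)]
    simp only [zero_mul]
  have hpx : qfact n (x + p) = qfact n (n - 1) / qfact n r :=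
    eq_div_of_mul_eq (qfact_ne_zero (by omega)) (qfact_mul_qfact (by omega))
  have hvp : qfact n (v + p) = qfact n (n - 1) / qfact n w :=
    eq_div_of_mul_eq (qfact_ne_zero (by omega)) (qfact_mul_qfact (by omega))
  rw [qbinomZ_natCast_eq_div (by omega) hxyn, qbinomZ_natCast_eq_div (by omega) (by omega),
    qbinomZ_natCast_eq_div (by omega) hyw, qbinomZ_natCast_eq_div (by omega) hxyn,
    qbinomZ_natCast_eq_div (by omega) (by omega), qbinomZ_natCast_eq_div (by omega) hyw,
    show x + y - u = v by omega, show y + w - u = r by omega, hpx, hvp]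
  simp only [Nat.add_sub_cancel_left, Nat.add_sub_cancel]
  ring

theorem qbinom_triple_bar_b_general (n : ℕ) (a b c d e f : ℤ)
    (hbdf : Admissible n b d f) (z : ℤ)
    (hs : max (max 0 ((n : ℤ) - 1 - 2 * e))
        (max ((d + f - b) - (d + e - c)) ((b + f - d) + (c + d - e) - ((n : ℤ) - 1))) ≤ z)
    (hS : z ≤ min (min (c + d - e) (a + f - e))
        (min ((n : ℤ) - 1 - (a + e - f)) ((n : ℤ) - 1 - (d + e - c)))) :
    qbinomZ n (2 * f) (b + d + f + 1 - n) *
      qbinomZ n ((b + f - d) + (c + d - e) - z) (b + f - d) *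
      qbinomZ n ((d + e - c) + z) (d + f - b) =
    qbinomZ n (2 * f) (((n : ℤ) - 1 - b) + d + f + 1 - n) *
      qbinomZ n ((((n : ℤ) - 1 - b) + f - d) + (c + d - e) - z)
        (((n : ℤ) - 1 - b) + f - d) *
      qbinomZ n ((d + e - c) + z) (d + f - ((n : ℤ) - 1 - b)) := by
  unfold Admissible at hbdf
  simp only [max_le_iff, le_min_iff] at hs hS
  convert qbinomZ_triple_symm (n := n) (x := (b + f - d).toNat) (y := (d + f - b).toNat)
    (u := (b + d + f + 1 - n).toNat) (v := (n - 1 - (b + d - f)).toNat)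
    (p := (c + d - e - z).toNat) (w := (b + e - c - f + z).toNat)
    (r := (n - 1 - (b + f - d) - (c + d - e - z)).toNat)
    (by omega) (by omega) (by omega) (by omega) (by omega) using 4 <;> omega

/-- the `b ↦ n-1-b` invariance of the product of three quantum binomials
appearing in the summand of the deformed 6j-symbol formula. -/
theorem qbinom_triple_bar_b (n : ℕ) (hn : 2 ≤ n) (a b c d e f : ℤ)
    (habc : Admissible n a b c) (hcde : Admissible n c d e)
    (haef : Admissible n a e f) (hbdf : Admissible n b d f) (z : ℤ)
    (hs : max (max 0 ((n : ℤ) - 1 - 2 * e))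
        (max ((d + f - b) - (d + e - c)) ((b + f - d) + (c + d - e) - ((n : ℤ) - 1))) ≤ z)
    (hS : z ≤ min (min (c + d - e) (a + f - e))
        (min ((n : ℤ) - 1 - (a + e - f)) ((n : ℤ) - 1 - (d + e - c)))) :
    qbinomZ n (2 * f) (b + d + f + 1 - n) *
      qbinomZ n ((b + f - d) + (c + d - e) - z) (b + f - d) *
      qbinomZ n ((d + e - c) + z) (d + f - b) =
    qbinomZ n (2 * f) (((n : ℤ) - 1 - b) + d + f + 1 - n) *
      qbinomZ n ((((n : ℤ) - 1 - b) + f - d) + (c + d - e) - z)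
        (((n : ℤ) - 1 - b) + f - d) *
      qbinomZ n ((d + e - c) + z) (d + f - ((n : ℤ) - 1 - b)) :=
  qbinom_triple_bar_b_general n a b c d e f hbdf z hs hS
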